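/- Let Q(x₁,x₂,x₃,x₄) = a₁x₁² + a₂x₂² + a₃x₃² + a₄x₄² be a minimized diagonal quaternary quadratic form with coefficients in 𝔽[t]. Then for every monic irreducible polynomial f ∈ 𝔽[t], the equation Q = 0 has a nontrivial solution in the f-adic completion 𝔽_q(t)_(f). -/

import Mathlib

/-!
Reduce the form modulo `f`. The residue field `𝔽[t]/(f)` is finite of odd characteristic, and
the reduced form has a zero whose coordinate at some unit coefficient is nonzero: if at least
three coefficients are units, because a nondegenerate binary form over a finite field represents
every element (by counting squares); if exactly two, `aᵢ` and `aⱼ`, because `-aᵢaⱼ` is then a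
square modulo `f`. Cubefreeness excludes fewer than two units. Since `2` is a unit, Newton's
iteration `x ↦ (x + c / x) / 2` converges in the complete field `𝔽_q(t)_(f)` and lifts this zero
by adjusting that single coordinate.
-/

open Polynomial IsDedekindDomain

set_option synthInstance.maxHeartbeats 1000000

/-- The height-one prime of `F[X]` generated by an irreducible polynomial `f`. -/
noncomputable def primeOfIrreducible {F : Type*} [Field F] {f : F[X]}
    (hf : Irreducible f) : HeightOneSpectrum F[X] where
  asIdeal := Ideal.span {f}
  isPrime := (Ideal.span_singleton_prime hf.ne_zero).mpr hf.prime
  ne_bot := by simpa [Ideal.span_singleton_eq_bot] using hf.ne_zero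

/-- A diagonal quaternary quadratic form `a₁x₁² + a₂x₂² + a₃x₃² + a₄x₄²` with nonzero
coefficients `aᵢ ∈ 𝔽[t]` is minimized if: (1) each `aᵢ` is squarefree; (2) `a₁a₂a₃a₄` is
cubefree; (3) whenever a monic irreducible `f` does not divide `aᵢ` and `aⱼ` but divides
the other two coefficients, `−aᵢaⱼ` is a square modulo `f`; (4) the number of square
leading coefficients among the `aᵢ` is at least the number of non-square ones. -/
def IsMinimized {F : Type*} [Field F] (a : Fin 4 → F[X]) : Prop :=
  (∀ m, a m ≠ 0) ∧
  (∀ m, Squarefree (a m)) ∧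
  (∀ f : F[X], f.Monic → Irreducible f → ¬ f ^ 3 ∣ (a 0 * a 1 * a 2 * a 3)) ∧
  (∀ f : F[X], f.Monic → Irreducible f → ∀ i j k l : Fin 4,
      ({i, j, k, l} : Finset (Fin 4)) = Finset.univ →
      ¬ f ∣ a i → ¬ f ∣ a j → f ∣ a k → f ∣ a l →
      IsSquare (Ideal.Quotient.mk (Ideal.span {f}) (-(a i * a j)))) ∧
  (Nat.card {m : Fin 4 // IsSquare ((a m).leadingCoeff)} ≥
    Nat.card {m : Fin 4 // ¬ IsSquare ((a m).leadingCoeff)})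

open Finset Filter Topology

def newtonSqrt {L : Type*} [Field L] (c ρ : L) : ℕ → L
  | 0 => ρ
  | n + 1 => (newtonSqrt c ρ n + c / newtonSqrt c ρ n) / 2

namespace Valued

variable {Γ₀ : Type*} [LinearOrderedCommGroupWithZero Γ₀]

section Ring

variable {R : Type*} [Ring R] [Valued R Γ₀] [MulArchimedean Γ₀]

theorem tendsto_zero_of_le_pow {α : Type*} {l : Filter α} {y : α → R} {k : α → ℕ} {ε : Γ₀}
    (hε : ε < 1) (hk : Tendsto k l atTop) (hy : ∀ i, v (y i) ≤ ε ^ k i) :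
    Tendsto y l (𝓝 0) := by
  refine (hasBasis_nhds_zero R Γ₀).tendsto_right_iff.mpr fun γ _ => ?_
  obtain ⟨N, hN⟩ :=
    exists_pow_lt₀ hε (Units.map MonoidWithZeroHom.ValueGroup₀.embedding.toMonoidHom γ)
  filter_upwards [hk.eventually_ge_atTop N] with i hi
  rw [Valuation.restrict_lt_iff_lt_embedding]
  exact (hy i).trans_lt ((pow_le_pow_right_of_le_one' hε.le hi).trans_lt hN)

theorem cauchySeq_of_le_pow {x : ℕ → R} {ε : Γ₀} (hε : ε < 1)
    (hx : ∀ n, v (x (n + 1) - x n) ≤ ε ^ n) : CauchySeq x := by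
  have hdist : ∀ n m, n ≤ m → v (x m - x n) ≤ ε ^ n := by
    intro n m hnm
    induction m, hnm using Nat.le_induction with
    | base => simp
    | succ m hm ih =>
      rw [← sub_add_sub_cancel]
      exact (v.map_add _ _).trans
        (max_le ((hx m).trans (pow_le_pow_right_of_le_one' hε.le hm)) ih)
  have hdist' : ∀ p : ℕ × ℕ, v (x p.2 - x p.1) ≤ ε ^ min p.1 p.2 := by
    rintro ⟨n, m⟩
    rcases le_total n m with h | h
    · simpa [h] using hdist n m h
    · simpa [h, Valuation.map_sub_swap] using hdist m n h
  rw [CauchySeq, cauchy_map_iff, uniformity_eq_comap_nhds_zero, tendsto_comap_iff]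
  exact ⟨atTop_neBot, tendsto_zero_of_le_pow hε (tendsto_inf_atTop _ tendsto_fst tendsto_snd)
    hdist'⟩

end Ring

variable {L : Type*} [Field L] [Valued L Γ₀]

section newtonSqrt

variable {c ρ : L} {n : ℕ}

theorem v_newtonSqrt_succ_sub (h2 : v (2 : L) = 1) (hn : v (newtonSqrt c ρ n) = 1) :
    v (newtonSqrt c ρ (n + 1) - newtonSqrt c ρ n) = v (newtonSqrt c ρ n ^ 2 - c) := by
  have h20 : (2 : L) ≠ 0 := v.ne_zero_iff.mp (h2 ▸ one_ne_zero)
  have hn0 : newtonSqrt c ρ n ≠ 0 := v.ne_zero_iff.mp (hn ▸ one_ne_zero)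
  have hstep : newtonSqrt c ρ (n + 1) - newtonSqrt c ρ n =
      -((newtonSqrt c ρ n ^ 2 - c) / (2 * newtonSqrt c ρ n)) := by
    rw [newtonSqrt]
    field_simp
    ring
  rw [hstep, Valuation.map_neg, map_div₀, map_mul, h2, hn, one_mul, div_one]

theorem v_newtonSqrt_succ_sq_sub (h2 : v (2 : L) = 1) (hn : v (newtonSqrt c ρ n) = 1) :
    v (newtonSqrt c ρ (n + 1) ^ 2 - c) = v (newtonSqrt c ρ n ^ 2 - c) ^ 2 := by
  have h20 : (2 : L) ≠ 0 := v.ne_zero_iff.mp (h2 ▸ one_ne_zero)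
  have hn0 : newtonSqrt c ρ n ≠ 0 := v.ne_zero_iff.mp (hn ▸ one_ne_zero)
  have hstep : newtonSqrt c ρ (n + 1) ^ 2 - c =
      ((newtonSqrt c ρ n ^ 2 - c) / (2 * newtonSqrt c ρ n)) ^ 2 := by
    rw [newtonSqrt]
    field_simp
    ring
  rw [hstep, map_pow, map_div₀, map_mul, h2, hn, one_mul, div_one]

theorem v_newtonSqrt (h2 : v (2 : L) = 1) (hρ : v ρ = 1) (hc : v (c - ρ ^ 2) < 1) (n : ℕ) :
    v (newtonSqrt c ρ n) = 1 ∧ v (newtonSqrt c ρ n ^ 2 - c) ≤ v (c - ρ ^ 2) ^ (n + 1) := by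
  induction n with
  | zero => simpa [newtonSqrt, Valuation.map_sub_swap] using hρ
  | succ n ih =>
    obtain ⟨hx, hsq⟩ := ih
    have hε : v (c - ρ ^ 2) ^ (n + 1) ≤ v (c - ρ ^ 2) :=
      (pow_le_pow_right_of_le_one' hc.le (Nat.le_add_left 1 n)).trans_eq (pow_one _)
    refine ⟨?_, ?_⟩
    · rw [← hx]
      apply Valuation.map_eq_of_sub_lt
      rw [v_newtonSqrt_succ_sub h2 hx, hx]
      exact (hsq.trans hε).trans_lt hc
    · rw [v_newtonSqrt_succ_sq_sub h2 hx, sq, pow_succ _ (n + 1)]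
      exact mul_le_mul' hsq (hsq.trans hε)

end newtonSqrt

theorem exists_sq_eq_of_v_sub_sq_lt_one [MulArchimedean Γ₀] [CompleteSpace L]
    (h2 : v (2 : L) = 1) {c ρ : L} (hρ : v ρ = 1) (hc : v (c - ρ ^ 2) < 1) : ∃ s, s ^ 2 = c := by
  have hx := v_newtonSqrt h2 hρ hc
  have hcauchy : CauchySeq (newtonSqrt c ρ) := by
    refine cauchySeq_of_le_pow hc fun n => ?_
    rw [v_newtonSqrt_succ_sub h2 (hx n).1]
    exact (hx n).2.trans (pow_le_pow_right_of_le_one' hc.le n.le_succ)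
  obtain ⟨s, hs⟩ := cauchySeq_tendsto_of_complete hcauchy
  refine ⟨s, sub_eq_zero.mp (tendsto_nhds_unique ((hs.pow 2).sub_const c) ?_)⟩
  exact tendsto_zero_of_le_pow hc (tendsto_add_atTop_nat 1) fun n => (hx n).2

theorem exists_sum_mul_sq_eq_zero_of_v_lt_one [MulArchimedean Γ₀] [CompleteSpace L]
    {ι : Type*} [Fintype ι] [DecidableEq ι] (h2 : v (2 : L) = 1) {A R : ι → L} {i : ι}
    (hA : v (A i) = 1) (hR : v (R i) = 1) (hsum : v (∑ m, A m * R m ^ 2) < 1) :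
    ∃ x : ι → L, x ≠ 0 ∧ ∑ m, A m * x m ^ 2 = 0 := by
  have hA0 : A i ≠ 0 := v.ne_zero_iff.mp (hA ▸ one_ne_zero)
  -- replacing `R i` by a square root of `c` makes the sum vanish
  set c := R i ^ 2 - (∑ m, A m * R m ^ 2) / A i
  have hc : v (c - R i ^ 2) < 1 := by
    rwa [sub_sub_cancel_left, Valuation.map_neg, map_div₀, hA, div_one]
  obtain ⟨s, hs⟩ := exists_sq_eq_of_v_sub_sq_lt_one h2 hR hc
  have hs0 : s ≠ 0 := by
    rintro rfl
    have : v c = 1 := by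
      rw [← one_pow 2, ← hR, ← map_pow]
      exact Valuation.map_eq_of_sub_lt _ (by rwa [map_pow, hR, one_pow])
    simp [← hs] at this
  refine ⟨Function.update R i s, fun h => hs0 (by simpa using congrFun h i), ?_⟩
  have hupd : ∀ m ∈ ({i}ᶜ : Finset ι), A m * Function.update R i s m ^ 2 = A m * R m ^ 2 :=
    fun m hm => by rw [Function.update_of_ne (by simpa using hm)]
  rw [Fintype.sum_eq_add_sum_compl i, Function.update_self, hs, sum_congr rfl hupd, mul_sub,
    mul_div_cancel₀ _ hA0, Fintype.sum_eq_add_sum_compl i]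
  ring

end Valued

theorem card_filter_dvd_le_of_not_pow_dvd_prod {M ι : Type*} [CommMonoid M] [Fintype ι]
    {p : M} [DecidablePred (p ∣ ·)] {a : ι → M} {n : ℕ} (h : ¬ p ^ (n + 1) ∣ ∏ m, a m) :
    #{m | p ∣ a m} ≤ n := by
  by_contra! hn
  refine h ((pow_dvd_pow p hn).trans ?_)
  calc p ^ #{m | p ∣ a m} = ∏ m ∈ {m | p ∣ a m}, p := (prod_const p).symm
    _ ∣ ∏ m ∈ {m | p ∣ a m}, a m := prod_dvd_prod_of_dvd _ _ fun m hm => (mem_filter.mp hm).2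
    _ ∣ ∏ m, a m := prod_dvd_prod_of_subset _ _ _ (subset_univ _)

theorem exists_sum_mul_sq_eq_zero_of_isSquare {R ι : Type*} [CommRing R] [Fintype ι]
    [DecidableEq ι] {b : ι → R} {i j : ι} (hij : i ≠ j) (hsq : IsSquare (-(b i * b j))) :
    ∃ ρ : ι → R, ρ j = b i ∧ ∑ m, b m * ρ m ^ 2 = 0 := by
  obtain ⟨σ, hσ⟩ := hsq
  refine ⟨fun m => if m = i then σ else if m = j then b i else 0, by simp [hij.symm], ?_⟩
  rw [Fintype.sum_eq_add i j hij fun m hm => by simp [hm.1, hm.2]]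
  simp only [if_neg hij.symm, ↓reduceIte]
  linear_combination (b i) * hσ.symm

namespace FiniteField

variable {k : Type*} [Field k] [Fintype k]

theorem exists_mul_sq_add_mul_sq_eq (hk : ringChar k ≠ 2) {b₁ b₂ : k} (h₁ : b₁ ≠ 0)
    (h₂ : b₂ ≠ 0) (c : k) : ∃ y z, b₁ * y ^ 2 + b₂ * z ^ 2 = c := by
  obtain ⟨y, z, hyz⟩ := exists_root_sum_quadratic (f := C b₁ * X ^ 2 - C c)
    (g := C b₂ * X ^ 2) (by compute_degree!) (by compute_degree!) (odd_card_of_char_ne_two hk)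
  refine ⟨y, z, ?_⟩
  simp only [eval_sub, eval_mul, eval_pow, eval_C, eval_X] at hyz
  linear_combination hyz

theorem exists_sum_mul_sq_eq_zero_of_three {ι : Type*} [Fintype ι] [DecidableEq ι]
    (hk : ringChar k ≠ 2) {b : ι → k} {i j l : ι} (hij : i ≠ j) (hil : i ≠ l) (hjl : j ≠ l)
    (hi : b i ≠ 0) (hj : b j ≠ 0) : ∃ ρ : ι → k, ρ l = 1 ∧ ∑ m, b m * ρ m ^ 2 = 0 := by
  obtain ⟨y, z, hyz⟩ := exists_mul_sq_add_mul_sq_eq hk hi hj (-b l)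
  refine ⟨fun m => if m = i then y else if m = j then z else if m = l then 1 else 0,
    by simp [hil.symm, hjl.symm], ?_⟩
  have hsum : ∀ m, b m * (if m = i then y else if m = j then z else if m = l then 1 else 0) ^ 2 =
      (if m = i then b i * y ^ 2 else 0) + (if m = j then b j * z ^ 2 else 0) +
        (if m = l then b l else 0) := by
    intro m
    by_cases hmi : m = i <;> by_cases hmj : m = j <;> by_cases hml : m = l <;> subst_vars <;>
      simp_all
  simp only [hsum, sum_add_distrib, sum_ite_eq', mem_univ, if_true]
  linear_combination hyz

theorem exists_sum_mul_sq_eq_zero_fin_four [DecidableEq k] (hk : ringChar k ≠ 2)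
    {b : Fin 4 → k} (hzero : #{m | b m = 0} ≤ 2)
    (hsq : ∀ i j l l' : Fin 4, ({i, j, l, l'} : Finset (Fin 4)) = univ →
      b i ≠ 0 → b j ≠ 0 → b l = 0 → b l' = 0 → IsSquare (-(b i * b j))) :
    ∃ (ρ : Fin 4 → k) (i : Fin 4), b i ≠ 0 ∧ ρ i ≠ 0 ∧ ∑ m, b m * ρ m ^ 2 = 0 := by
  have hcard := card_filter_add_card_filter_not (s := univ) (fun m => b m ≠ 0)
  simp only [not_not, card_univ, Fintype.card_fin] at hcard
  rcases (show 2 < #{m | b m ≠ 0} ∨ #{m | b m ≠ 0} = 2 by omega) with h3 | h2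
  · obtain ⟨i, hi, j, hj, l, hl, hij, hil, hjl⟩ := two_lt_card.mp h3
    simp only [mem_filter, mem_univ, true_and] at hi hj hl
    obtain ⟨ρ, hρ, hsum⟩ := exists_sum_mul_sq_eq_zero_of_three hk hij hil hjl hi hj
    exact ⟨ρ, l, hl, hρ ▸ one_ne_zero, hsum⟩
  · obtain ⟨i, j, hij, hN⟩ := card_eq_two.mp h2
    obtain ⟨l, l', -, hZ⟩ := card_eq_two.mp (show #{m | b m = 0} = 2 by omega)
    have hne : ∀ m, b m ≠ 0 ↔ m = i ∨ m = j := by simpa [Finset.ext_iff] using hN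
    have heq : ∀ m, b m = 0 ↔ m = l ∨ m = l' := by simpa [Finset.ext_iff] using hZ
    have huniv : ({i, j, l, l'} : Finset (Fin 4)) = univ := by
      ext m
      have := hne m
      have := heq m
      simp only [mem_insert, mem_singleton, mem_univ, iff_true]
      tauto
    obtain ⟨ρ, hρ, hsum⟩ := exists_sum_mul_sq_eq_zero_of_isSquare hij
      (hsq i j l l' huniv ((hne i).mpr (.inl rfl)) ((hne j).mpr (.inr rfl))
        ((heq l).mpr (.inl rfl)) ((heq l').mpr (.inr rfl)))
    exact ⟨ρ, j, (hne j).mpr (.inr rfl), hρ ▸ (hne i).mpr (.inl rfl), hsum⟩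

end FiniteField

namespace IsDedekindDomain.HeightOneSpectrum

variable {R K : Type*} [CommRing R] [IsDedekindDomain R] [Field K] [Algebra R K]
  [IsFractionRing R K] (v : HeightOneSpectrum R)

theorem valued_algebraMap_adicCompletion (r : R) :
    Valued.v (algebraMap R (v.adicCompletion K) r) = v.intValuation r := by
  rw [← v.valuation_of_algebraMap (K := K)]
  exact v.valuedAdicCompletion_eq_valuation r

theorem valued_algebraMap_adicCompletion_eq_one {r : R} (hr : r ∉ v.asIdeal) :
    Valued.v (algebraMap R (v.adicCompletion K) r) = 1 := by
  rw [valued_algebraMap_adicCompletion, intValuation_eq_one_iff_mem_primeCompl]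
  exact hr

theorem valued_algebraMap_adicCompletion_lt_one {r : R} (hr : r ∈ v.asIdeal) :
    Valued.v (algebraMap R (v.adicCompletion K) r) < 1 := by
  rw [valued_algebraMap_adicCompletion, intValuation_lt_one_iff_mem]
  exact hr

theorem exists_sum_mul_sq_eq_zero_adicCompletion {ι : Type*} [Fintype ι] [DecidableEq ι]
    (h2 : (2 : R) ∉ v.asIdeal) {a r : ι → R} {i : ι} (ha : a i ∉ v.asIdeal)
    (hr : r i ∉ v.asIdeal) (hsum : ∑ m, a m * r m ^ 2 ∈ v.asIdeal) :
    ∃ x : ι → v.adicCompletion K, x ≠ 0 ∧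
      ∑ m, algebraMap R (v.adicCompletion K) (a m) * x m ^ 2 = 0 := by
  have h2' : Valued.v (2 : v.adicCompletion K) = 1 := by
    rw [← map_ofNat (algebraMap R (v.adicCompletion K)) 2]
    exact v.valued_algebraMap_adicCompletion_eq_one h2
  have hsum' : Valued.v (∑ m, algebraMap R (v.adicCompletion K) (a m) *
      algebraMap R (v.adicCompletion K) (r m) ^ 2) < 1 := by
    simp only [← map_pow, ← map_mul, ← map_sum]
    exact v.valued_algebraMap_adicCompletion_lt_one hsum
  exact Valued.exists_sum_mul_sq_eq_zero_of_v_lt_one (A := fun m => algebraMap R _ (a m))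
    (R := fun m => algebraMap R _ (r m)) h2'
    (v.valued_algebraMap_adicCompletion_eq_one ha) (v.valued_algebraMap_adicCompletion_eq_one hr)
    hsum'

theorem exists_sum_mul_sq_eq_zero_adicCompletion_fin_four [Finite (R ⧸ v.asIdeal)]
    (h2 : (2 : R) ∉ v.asIdeal) {a : Fin 4 → R} [DecidablePred (a · ∈ v.asIdeal)]
    (hcard : #{m | a m ∈ v.asIdeal} ≤ 2)
    (hsq : ∀ i j l l' : Fin 4, ({i, j, l, l'} : Finset (Fin 4)) = univ →
      a i ∉ v.asIdeal → a j ∉ v.asIdeal → a l ∈ v.asIdeal → a l' ∈ v.asIdeal →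
      IsSquare (Ideal.Quotient.mk v.asIdeal (-(a i * a j)))) :
    ∃ x : Fin 4 → v.adicCompletion K, x ≠ 0 ∧
      ∑ m, algebraMap R (v.adicCompletion K) (a m) * x m ^ 2 = 0 := by
  classical
  let := Ideal.Quotient.field v.asIdeal
  have := Fintype.ofFinite (R ⧸ v.asIdeal)
  set π := Ideal.Quotient.mk v.asIdeal
  have hπ : ∀ r, π r = 0 ↔ r ∈ v.asIdeal := fun r => Ideal.Quotient.eq_zero_iff_mem
  have hk : ringChar (R ⧸ v.asIdeal) ≠ 2 := fun h =>
    h2 ((hπ 2).mp (by rw [map_ofNat]; exact_mod_cast (ringChar.spec _ 2).mpr h.dvd))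
  obtain ⟨ρ, i, hi, hρ, hsum⟩ := FiniteField.exists_sum_mul_sq_eq_zero_fin_four hk
    (b := fun m => π (a m)) (by simpa only [hπ] using hcard)
    (fun i j l l' huniv hi hj hl hl' => by
      simpa only [map_neg, map_mul] using hsq i j l l' huniv (mt (hπ _).mpr hi)
        (mt (hπ _).mpr hj) ((hπ _).mp hl) ((hπ _).mp hl'))
  choose r hr using fun m => Ideal.Quotient.mk_surjective (ρ m)
  refine v.exists_sum_mul_sq_eq_zero_adicCompletion h2 (r := r) (mt (hπ _).mpr hi)
    (mt (hπ _).mpr (by rwa [hr])) ?_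
  rw [← hπ, map_sum, ← hsum]
  exact sum_congr rfl fun m _ => by rw [map_mul, map_pow, hr]

end IsDedekindDomain.HeightOneSpectrum

/-- a minimized diagonal quaternary quadratic form has a nontrivial zero in
the `f`-adic completion of `𝔽_q(t)` for every monic irreducible `f ∈ 𝔽[t]`. -/
theorem minimized_locally_isotropic
    {F : Type*} [Field F] [Fintype F] (hodd : ringChar F ≠ 2)
    (a : Fin 4 → F[X]) (hmin : IsMinimized a)
    (f : F[X]) (hfm : f.Monic) (hf : Irreducible f) :
    ∃ x : Fin 4 → (primeOfIrreducible hf).adicCompletion (RatFunc F),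
      x ≠ 0 ∧
      ∑ m, algebraMap F[X] ((primeOfIrreducible hf).adicCompletion (RatFunc F)) (a m)
          * x m ^ 2 = 0 := by
  obtain ⟨-, -, hcube, hsq, -⟩ := hmin
  have hmem : ∀ p : F[X], p ∈ (primeOfIrreducible hf).asIdeal ↔ f ∣ p :=
    fun p => Ideal.mem_span_singleton
  have : Module.Finite F (F[X] ⧸ Ideal.span {f}) := hfm.finite_quotient
  have : Finite (F[X] ⧸ (primeOfIrreducible hf).asIdeal) :=
    Module.finite_of_finite F (M := F[X] ⧸ Ideal.span {f})
  have h2 : (2 : F[X]) ∉ (primeOfIrreducible hf).asIdeal := by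
    have h2unit : IsUnit (2 : F[X]) := by
      rw [← map_ofNat C 2]
      exact (IsUnit.mk0 (2 : F) (Ring.two_ne_zero hodd)).map C
    exact fun h => hf.not_isUnit (isUnit_of_dvd_unit ((hmem 2).mp h) h2unit)
  classical
  refine (primeOfIrreducible hf).exists_sum_mul_sq_eq_zero_adicCompletion_fin_four h2 ?_ ?_
  · simp only [hmem]
    convert card_filter_dvd_le_of_not_pow_dvd_prod (p := f) (a := a) (n := 2) ?_
    rw [Fin.prod_univ_four]
    exact hcube f hfm hf
  · intro i j l l' huniv hi hj hl hl'
    exact hsq f hfm hf i j l l' huniv (mt (hmem _).mpr hi) (mt (hmem _).mpr hj) ((hmem _).mp hl)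
      ((hmem _).mp hl')
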